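/- arXiv:0903.4472 — 3 statements merged into one kernel-verified Lean document; each statement's English description precedes it below -/
import Mathlib

section
/- Let Γ be a finite group, H a minimal normal subgroup of Γ with quotient G = Γ/H and quotient map α. Let φ₁, φ₂: Θ → Γ be surjective homomorphisms from a group Θ with α∘φ₁ = α∘φ₂ and ker φ₁ ≠ ker φ₂. Then the induced map φ = (φ₁, φ₂): Θ → Γ ×_G Γ to the fiber product is surjective. -/
/-!
Both `φ₁ (ker φ₂)` and `φ₂ (ker φ₁)` are normal subgroups of `Γ` (images of normal subgroups
under surjections) lying in `H = ker α`, because `α ∘ φ₁ = α ∘ φ₂`. By minimality each is `1`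
or `H`; they cannot both be `1`, since then `ker φ₁ = ker φ₂`. If, say, `φ₁ (ker φ₂) = H`, then
for `α a = α b` pick `θ` with `φ₂ θ = b`; `a (φ₁ θ)⁻¹ ∈ H` is `φ₁ κ` for some `κ ∈ ker φ₂`, and
`κ θ` maps to `(a, b)`.
-/

/-- `H` is a minimal normal subgroup: nontrivial, normal, and containing no
nontrivial proper normal subgroup of the ambient group. -/
def IsMinimalNormal {Γ : Type} [Group Γ] (H : Subgroup Γ) : Prop :=
  H.Normal ∧ H ≠ ⊥ ∧ ∀ K : Subgroup Γ, K.Normal → K ≤ H → K = ⊥ ∨ K = H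

section FiberProduct

variable {Γ G Θ : Type*} [Group Γ] [Group G] [Group Θ] {α : Γ →* G} {φ₁ φ₂ : Θ →* Γ}

theorem map_ker_le_ker_of_comp_eq (hcomp : α.comp φ₁ = α.comp φ₂) :
    φ₂.ker.map φ₁ ≤ α.ker := by
  rintro _ ⟨κ, hκ, rfl⟩
  rw [MonoidHom.mem_ker, ← MonoidHom.comp_apply, hcomp, MonoidHom.comp_apply, hκ, map_one]

theorem exists_apply_eq_pair_of_ker_le_map (hcomp : α.comp φ₁ = α.comp φ₂)
    (hs2 : Function.Surjective φ₂) (hH : α.ker ≤ φ₂.ker.map φ₁) {a b : Γ} (hab : α a = α b) :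
    ∃ θ, φ₁ θ = a ∧ φ₂ θ = b := by
  obtain ⟨θ, rfl⟩ := hs2 b
  have hαθ : α (φ₁ θ) = α (φ₂ θ) := DFunLike.congr_fun hcomp θ
  obtain ⟨κ, hκ, hφκ⟩ : a * (φ₁ θ)⁻¹ ∈ φ₂.ker.map φ₁ :=
    hH (by rw [MonoidHom.mem_ker, map_mul, map_inv, hαθ, hab, mul_inv_cancel])
  refine ⟨κ * θ, ?_, ?_⟩
  · rw [map_mul, hφκ, inv_mul_cancel_right]
  · rw [map_mul, hκ, one_mul]

end FiberProduct

theorem IsMinimalNormal.map_ker_eq_bot_or_eq {Γ : Type} {G Θ : Type*} [Group Γ] [Group G]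
    [Group Θ] {α : Γ →* G} {φ₁ φ₂ : Θ →* Γ} (hmin : IsMinimalNormal α.ker)
    (hcomp : α.comp φ₁ = α.comp φ₂) (hs1 : Function.Surjective φ₁) :
    φ₂.ker.map φ₁ = ⊥ ∨ φ₂.ker.map φ₁ = α.ker :=
  hmin.2.2 _ (φ₂.normal_ker.map φ₁ hs1) (map_ker_le_ker_of_comp_eq hcomp)

theorem stmt2_general {Γ G Θ : Type} [Group Γ] [Group G] [Group Θ]
    (α : Γ →* G)
    (hmin : IsMinimalNormal α.ker)
    (φ₁ φ₂ : Θ →* Γ)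
    (hs1 : Function.Surjective φ₁) (hs2 : Function.Surjective φ₂)
    (hcomp : α.comp φ₁ = α.comp φ₂) (hker : φ₁.ker ≠ φ₂.ker) :
    ∀ p : Γ × Γ, α p.1 = α p.2 → ∃ θ : Θ, φ₁ θ = p.1 ∧ φ₂ θ = p.2 := by
  rintro ⟨a, b⟩ hab
  rcases hmin.map_ker_eq_bot_or_eq hcomp hs1 with h₁ | h₁
  · rcases hmin.map_ker_eq_bot_or_eq hcomp.symm hs2 with h₂ | h₂
    · exact absurd (le_antisymm ((Subgroup.map_eq_bot_iff _).mp h₂)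
        ((Subgroup.map_eq_bot_iff _).mp h₁)) hker
    · obtain ⟨θ, h₂, h₁⟩ := exists_apply_eq_pair_of_ker_le_map hcomp.symm hs1 h₂.ge hab.symm
      exact ⟨θ, h₁, h₂⟩
  · exact exists_apply_eq_pair_of_ker_le_map hcomp hs2 h₁.ge hab

theorem stmt2 {Γ G Θ : Type} [Group Γ] [Finite Γ] [Group G] [Group Θ]
    (α : Γ →* G) (hα : Function.Surjective α)
    (hmin : IsMinimalNormal α.ker)
    (φ₁ φ₂ : Θ →* Γ)
    (hs1 : Function.Surjective φ₁) (hs2 : Function.Surjective φ₂)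
    (hcomp : α.comp φ₁ = α.comp φ₂) (hker : φ₁.ker ≠ φ₂.ker) :
    ∀ p : Γ × Γ, α p.1 = α p.2 → ∃ θ : Θ, φ₁ θ = p.1 ∧ φ₂ θ = p.2 :=
  stmt2_general α hmin φ₁ φ₂ hs1 hs2 hcomp hker
end

section
/- Let Γ be a finite group, H a minimal normal subgroup of Γ, α: Γ → G = Γ/H the quotient map, and φ₁, φ₂: Θ → Γ surjections from a group Θ with α∘φ₁ = α∘φ₂ and K₁ = ker φ₁ ≠ K₂ = ker φ₂. Then φ₂(K₁) = H, i.e., the image of ker φ₁ under φ₂ equals H. -/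
namespace MonoidHom

variable {Θ Γ : Type*} [Group Θ] [Group Γ]

theorem index_ker_of_surjective {φ : Θ →* Γ} (hφ : Function.Surjective φ) :
    φ.ker.index = Nat.card Γ := by
  rw [← comap_bot, Subgroup.index_comap_of_surjective ⊥ hφ, Subgroup.index_bot]

theorem ker_eq_of_ker_le_of_surjective [Finite Γ] {φ ψ : Θ →* Γ}
    (hφ : Function.Surjective φ) (hψ : Function.Surjective ψ) (hle : φ.ker ≤ ψ.ker) :
    φ.ker = ψ.ker := by
  refine hle.eq_of_not_lt fun hlt => ?_
  have : φ.ker.FiniteIndex := ⟨by simp [index_ker_of_surjective hφ, Nat.card_pos.ne']⟩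
  simpa [index_ker_of_surjective hφ, index_ker_of_surjective hψ] using
    Subgroup.index_strictAnti hlt

theorem map_ker_le_ker_of_comp_eq {G : Type*} [Group G] {α : Γ →* G} {φ ψ : Θ →* Γ}
    (h : α.comp φ = α.comp ψ) : φ.ker.map ψ ≤ α.ker := by
  rintro _ ⟨k, hk, rfl⟩
  rw [mem_ker, ← comp_apply, ← h, comp_apply, hk, map_one]

end MonoidHom

theorem stmt3_general {Γ G Θ : Type} [Group Γ] [Finite Γ] [Group G] [Group Θ]
    (α : Γ →* G)
    (hmin : IsMinimalNormal α.ker)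
    (φ₁ φ₂ : Θ →* Γ)
    (hs1 : Function.Surjective φ₁) (hs2 : Function.Surjective φ₂)
    (hcomp : α.comp φ₁ = α.comp φ₂) (hker : φ₁.ker ≠ φ₂.ker) :
    Subgroup.map φ₂ φ₁.ker = α.ker := by
  obtain ⟨-, -, hmin⟩ := hmin
  have hnormal : (φ₁.ker.map φ₂).Normal := φ₁.normal_ker.map φ₂ hs2
  refine (hmin _ hnormal (MonoidHom.map_ker_le_ker_of_comp_eq hcomp)).resolve_left
    fun hbot => hker ?_
  exact MonoidHom.ker_eq_of_ker_le_of_surjective hs1 hs2 ((Subgroup.map_eq_bot_iff _).mp hbot)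

theorem stmt3 {Γ G Θ : Type} [Group Γ] [Finite Γ] [Group G] [Group Θ]
    (α : Γ →* G) (hα : Function.Surjective α)
    (hmin : IsMinimalNormal α.ker)
    (φ₁ φ₂ : Θ →* Γ)
    (hs1 : Function.Surjective φ₁) (hs2 : Function.Surjective φ₂)
    (hcomp : α.comp φ₁ = α.comp φ₂) (hker : φ₁.ker ≠ φ₂.ker) :
    Subgroup.map φ₂ φ₁.ker = α.ker :=
  stmt3_general α hmin φ₁ φ₂ hs1 hs2 hcomp hker
end

section
/- Let p be a prime and k a field of characteristic p containing F_p with a, b ∈ k nonzero, and r a positive integer coprime to p. Suppose Z^p − Z − a x^r and Z^p − Z − b x^r are irreducible over k(x). Then the field extensions of k(x) generated by a root of Z^p − Z − a x^r and by a root of Z^p − Z − b x^r are equal (inside a fixed algebraic closure) if and only if a/b ∈ F_p. -/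
/-!
If `z ^ p - z = u` generates an extension `E = K⟮z⟯` of degree `p`, then `z ↦ z + 1` extends to
an automorphism `σ` of `E` of order `p`, so the fixed field of `σ` is `K`. For `y ∈ E` with
`y ^ p - y = v ∈ K`, the difference `σ y - y` is a root of `T ^ p - T`, i.e. some `c ∈ 𝔽_p`, and
then `y - c z` is fixed by `σ`; hence `v = c u + (w ^ p - w)` with `w ∈ K`. Over `K = k(x)` with
`u = a x ^ r`, `v = b x ^ r`, the element `w` is integral over the integrally closed ring `k[x]`,
so it is a polynomial, and `deg (w ^ p - w)` is divisible by `p` while `p ∤ r`: thus `b = c a`.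
Conversely, if `a = c b` then `z_a - c z_b` is a root of `T ^ p - T`, hence lies in `𝔽_p`.
-/

open Polynomial IntermediateField

section ArtinSchreierPolynomial

variable {R : Type*} [CommRing R] {n : ℕ}

theorem Polynomial.monic_X_pow_sub_X_sub_C [Nontrivial R] (hn : 1 < n) (u : R) :
    (X ^ n - X - C u : R[X]).Monic := by
  rw [sub_sub]
  exact monic_X_pow_sub ((degree_X_add_C u).trans_lt (by exact_mod_cast hn))

theorem Polynomial.natDegree_X_pow_sub_X_sub_C [Nontrivial R] (hn : 1 < n) (u : R) :
    (X ^ n - X - C u : R[X]).natDegree = n := by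
  rw [sub_sub, natDegree_sub_eq_left_of_natDegree_lt] <;> rw [natDegree_X_pow]
  rwa [natDegree_X_add_C]

theorem Polynomial.aeval_X_pow_sub_X_sub_C_eq_zero_iff {A : Type*} [CommRing A] [Algebra R A]
    (x : A) (u : R) : aeval x (X ^ n - X - C u) = 0 ↔ x ^ n - x = algebraMap R A u := by
  simp [sub_eq_zero]

theorem isIntegral_of_pow_sub_self_eq [Nontrivial R] {A : Type*} [CommRing A] [Algebra R A]
    (hn : 1 < n) {x : A} {u : R} (hx : x ^ n - x = algebraMap R A u) : IsIntegral R x :=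
  ⟨_, monic_X_pow_sub_X_sub_C hn u, by rw [← aeval_def, aeval_X_pow_sub_X_sub_C_eq_zero_iff, hx]⟩

theorem Polynomial.dvd_natDegree_pow_sub_self [IsDomain R] (hn : 1 < n) (f : R[X]) :
    n ∣ (f ^ n - f).natDegree := by
  rcases Nat.eq_zero_or_pos f.natDegree with h0 | hpos
  · rw [eq_C_of_natDegree_eq_zero h0, ← C_pow, ← C_sub, natDegree_C]
    exact dvd_zero n
  · rw [natDegree_sub_eq_left_of_natDegree_lt] <;> rw [natDegree_pow]
    · exact dvd_mul_right n _
    · exact lt_mul_of_one_lt_left hpos hn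

end ArtinSchreierPolynomial

section ArtinSchreierRoot

variable {K L : Type*} [Field K] [Field L] [Algebra K L] {n : ℕ} {u : K} {x : L}

theorem minpoly_eq_X_pow_sub_X_sub_C (hn : 1 < n) (hirr : Irreducible (X ^ n - X - C u))
    (hx : x ^ n - x = algebraMap K L u) : minpoly K x = X ^ n - X - C u :=
  (minpoly.eq_of_irreducible_of_monic hirr ((aeval_X_pow_sub_X_sub_C_eq_zero_iff x u).mpr hx)
    (monic_X_pow_sub_X_sub_C hn u)).symm

theorem finrank_adjoin_of_pow_sub_self_eq (hn : 1 < n) (hirr : Irreducible (X ^ n - X - C u))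
    (hx : x ^ n - x = algebraMap K L u) : Module.finrank K K⟮x⟯ = n := by
  rw [adjoin.finrank (isIntegral_of_pow_sub_self_eq hn hx), minpoly_eq_X_pow_sub_X_sub_C hn hirr hx,
    natDegree_X_pow_sub_X_sub_C hn]

end ArtinSchreierRoot

theorem RatFunc.eq_zero_of_pow_sub_self_eq_C_mul_X_pow {k : Type*} [Field k] {n r : ℕ}
    (hn : 1 < n) (hnr : ¬n ∣ r) {d : k} {w : RatFunc k}
    (h : w ^ n - w = algebraMap k (RatFunc k) d * RatFunc.X ^ r) : d = 0 := by
  have hg : algebraMap k (RatFunc k) d * X ^ r = algebraMap k[X] (RatFunc k) (.C d * .X ^ r) := by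
    rw [map_mul, map_pow, algebraMap_C, algebraMap_X, algebraMap_eq_C]
  obtain ⟨f, rfl⟩ :=
    IsIntegrallyClosed.isIntegral_iff.mp (isIntegral_of_pow_sub_self_eq hn (h.trans hg))
  have hf : f ^ n - f = .C d * .X ^ r :=
    IsFractionRing.injective k[X] (RatFunc k) (by rw [map_sub, map_pow, h, hg])
  by_contra hd
  apply hnr
  rw [← natDegree_C_mul_X_pow r d hd, ← hf]
  exact dvd_natDegree_pow_sub_self hn f

theorem RingHom.map_zmodCastHom {p : ℕ} {R S : Type*} [Ring R] [Ring S] [CharP R p] [CharP S p]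
    (f : R →+* S) (c : ZMod p) : f (ZMod.castHom dvd_rfl R c) = ZMod.castHom dvd_rfl S c :=
  RingHom.congr_fun (RingHom.ext_zmod (f.comp _) _) c

section PrimeField

variable {p : ℕ} [Fact p.Prime]

theorem ZMod.exists_castHom_eq_of_pow_eq_self {F : Type*} [Field F] [CharP F p] {x : F}
    (h : x ^ p = x) : ∃ c : ZMod p, ZMod.castHom dvd_rfl F c = x := by
  rwa [← Subfield.mem_bot_iff_pow_eq_self F p, ← fieldRange_castHom_eq_bot p] at h

theorem ZMod.castHom_pow_char {R : Type*} [Ring R] [CharP R p] (c : ZMod p) :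
    ZMod.castHom dvd_rfl R c ^ p = ZMod.castHom dvd_rfl R c := by
  rw [← map_pow, ZMod.pow_card]

end PrimeField

theorem exists_algebraMap_eq_of_orderOf_eq_finrank {K E : Type*} [Field K] [Field E]
    [Algebra K E] [FiniteDimensional K E] {σ : E ≃ₐ[K] E} (hσ : orderOf σ = Module.finrank K E)
    {w : E} (hw : σ w = w) : ∃ w₀ : K, algebraMap K E w₀ = w := by
  have hfix : w ∈ fixedField (Subgroup.zpowers σ) := by
    have : Subgroup.zpowers σ ≤ MulAction.stabilizer (E ≃ₐ[K] E) w := Subgroup.zpowers_le.mpr hw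
    exact fun τ ↦ this τ.2
  have hfr : Module.finrank K (fixedField (Subgroup.zpowers σ)) = 1 := by
    have htower := Module.finrank_mul_finrank K (fixedField (Subgroup.zpowers σ)) E
    rw [finrank_fixedField_eq_card, Nat.card_zpowers, hσ] at htower
    exact Nat.eq_of_mul_eq_mul_right Module.finrank_pos (by rw [htower, one_mul])
  rw [finrank_eq_one_iff.mp hfr] at hfix
  exact mem_bot.mp hfix

section ArtinSchreier

variable {K L : Type*} [Field K] [Field L] [Algebra K L] {p : ℕ} [Fact p.Prime] [CharP K p]
  {u : K} {x : L}

theorem exists_algEquiv_apply_gen_eq_add_one (hirr : Irreducible (X ^ p - X - C u))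
    (hx : x ^ p - x = algebraMap K L u) :
    ∃ σ : K⟮x⟯ ≃ₐ[K] K⟮x⟯, σ (AdjoinSimple.gen K x) = AdjoinSimple.gen K x + 1 := by
  have hp : p.Prime := Fact.out
  have := IntermediateField.charP K⟮x⟯ p
  have hint := isIntegral_of_pow_sub_self_eq hp.one_lt hx
  have := adjoin.finiteDimensional hint
  set pb := adjoin.powerBasis hint
  have hroot : aeval (AdjoinSimple.gen K x + 1) (minpoly K pb.gen) = 0 := by
    rw [adjoin.powerBasis_gen, minpoly_gen, minpoly_eq_X_pow_sub_X_sub_C hp.one_lt hirr hx,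
      aeval_X_pow_sub_X_sub_C_eq_zero_iff, add_pow_char, one_pow, add_sub_add_right_eq_sub]
    exact Subtype.ext hx
  let σ := pb.lift _ hroot
  exact ⟨AlgEquiv.ofBijective σ (Algebra.IsAlgebraic.algHom_bijective σ), pb.lift_gen _ hroot⟩

theorem orderOf_eq_of_apply_gen_eq_add_one {σ : K⟮x⟯ ≃ₐ[K] K⟮x⟯}
    (hσ : σ (AdjoinSimple.gen K x) = AdjoinSimple.gen K x + 1) : orderOf σ = p := by
  have := IntermediateField.charP K⟮x⟯ p
  have hpow (n : ℕ) : (σ ^ n) (AdjoinSimple.gen K x) = AdjoinSimple.gen K x + n := by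
    induction n with
    | zero => simp
    | succ n ih =>
      rw [pow_succ', AlgEquiv.mul_apply, ih, map_add, hσ, map_natCast]
      push_cast
      ring
  refine orderOf_eq_prime (AlgEquiv.coe_toAlgHom_injective (adjoin_algHom_ext K fun y hy ↦ ?_)) ?_
  · obtain rfl : y = x := hy
    exact (hpow p).trans (by rw [CharP.cast_eq_zero, add_zero]; rfl)
  · rintro rfl
    simp at hσ

theorem exists_eq_castHom_smul_gen_add_algebraMap (hirr : Irreducible (X ^ p - X - C u))
    (hx : x ^ p - x = algebraMap K L u) {y : K⟮x⟯} {v : K}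
    (hy : y ^ p - y = algebraMap K K⟮x⟯ v) :
    ∃ c : ZMod p, ∃ w : K, y = ZMod.castHom dvd_rfl K c • AdjoinSimple.gen K x +
      algebraMap K K⟮x⟯ w := by
  have hp : p.Prime := Fact.out
  have := IntermediateField.charP K⟮x⟯ p
  have := adjoin.finiteDimensional (isIntegral_of_pow_sub_self_eq hp.one_lt hx)
  obtain ⟨σ, hσ⟩ := exists_algEquiv_apply_gen_eq_add_one hirr hx
  have hσy : σ y ^ p - σ y = algebraMap K K⟮x⟯ v := by
    rw [← map_pow, ← map_sub, hy, AlgEquiv.commutes]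
  obtain ⟨c, hc⟩ : ∃ c : ZMod p, ZMod.castHom dvd_rfl K⟮x⟯ c = σ y - y := by
    refine ZMod.exists_castHom_eq_of_pow_eq_self ?_
    rw [sub_pow_char]
    linear_combination hσy - hy
  have hσc : σ (ZMod.castHom dvd_rfl K⟮x⟯ c) = ZMod.castHom dvd_rfl K⟮x⟯ c :=
    RingHom.map_zmodCastHom (σ : K⟮x⟯ →+* K⟮x⟯) c
  have hord : orderOf σ = Module.finrank K K⟮x⟯ := by
    rw [orderOf_eq_of_apply_gen_eq_add_one hσ, finrank_adjoin_of_pow_sub_self_eq hp.one_lt hirr hx]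
  obtain ⟨w, hw⟩ := exists_algebraMap_eq_of_orderOf_eq_finrank hord
    (w := y - ZMod.castHom dvd_rfl K⟮x⟯ c * AdjoinSimple.gen K x)
    (by rw [map_sub, map_mul, hσc, hσ]; linear_combination -hc)
  refine ⟨c, w, ?_⟩
  rw [hw, Algebra.smul_def, RingHom.map_zmodCastHom]
  ring

theorem exists_eq_castHom_mul_add_pow_sub_self_of_mem_adjoin
    (hirr : Irreducible (X ^ p - X - C u)) (hx : x ^ p - x = algebraMap K L u) {y : L}
    (hyx : y ∈ K⟮x⟯) {v : K} (hy : y ^ p - y = algebraMap K L v) :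
    ∃ c : ZMod p, ∃ w : K, v = ZMod.castHom dvd_rfl K c * u + (w ^ p - w) := by
  have := (Algebra.charP_iff K L p).mp ‹_›
  obtain ⟨c, w, hcw⟩ :=
    exists_eq_castHom_smul_gen_add_algebraMap hirr hx (y := ⟨y, hyx⟩) (v := v) (Subtype.ext hy)
  have hyx : y = ZMod.castHom dvd_rfl L c * x + algebraMap K L w := by
    have := congrArg (algebraMap K⟮x⟯ L) hcw
    rwa [map_add, Algebra.smul_def, map_mul, ← IsScalarTower.algebraMap_apply,
      ← IsScalarTower.algebraMap_apply, RingHom.map_zmodCastHom,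
      AdjoinSimple.algebraMap_gen] at this
  refine ⟨c, w, (algebraMap K L).injective ?_⟩
  rw [map_add, map_mul, map_sub, map_pow, RingHom.map_zmodCastHom, ← hx, ← hy, hyx, add_pow_char,
    mul_pow, ZMod.castHom_pow_char]
  ring

theorem mem_adjoin_simple_of_eq_castHom_mul_add_pow_sub_self {y : L} {v : K}
    (hx : x ^ p - x = algebraMap K L u) (hy : y ^ p - y = algebraMap K L v) {c : ZMod p} {w : K}
    (h : u = ZMod.castHom dvd_rfl K c * v + (w ^ p - w)) : x ∈ K⟮y⟯ := by
  have := (Algebra.charP_iff K L p).mp ‹_›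
  have hF (e : ZMod p) : ZMod.castHom dvd_rfl L e ∈ K⟮y⟯ := by
    rw [← RingHom.map_zmodCastHom (algebraMap K L)]
    exact K⟮y⟯.algebraMap_mem _
  have hu := congrArg (algebraMap K L) h
  rw [map_add, map_mul, map_sub, map_pow, RingHom.map_zmodCastHom] at hu
  obtain ⟨e, he⟩ : ∃ e : ZMod p,
      ZMod.castHom dvd_rfl L e = x - ZMod.castHom dvd_rfl L c * y - algebraMap K L w := by
    refine ZMod.exists_castHom_eq_of_pow_eq_self ?_
    rw [sub_pow_char, sub_pow_char, mul_pow, ZMod.castHom_pow_char]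
    linear_combination hx - ZMod.castHom dvd_rfl L c * hy + hu
  have hxy : x = ZMod.castHom dvd_rfl L c * y + algebraMap K L w + ZMod.castHom dvd_rfl L e := by
    rw [he]
    ring
  rw [hxy]
  exact add_mem (add_mem (mul_mem (hF c) (mem_adjoin_simple_self K y)) (K⟮y⟯.algebraMap_mem w))
    (hF e)

end ArtinSchreier

theorem stmt5_general {p : ℕ} (hp : p.Prime) {k : Type} [Field k] [CharP k p]
    (a b : k) (ha : a ≠ 0) (hb : b ≠ 0) (r : ℕ) (hrp : Nat.Coprime r p)
    (hIa : Irreducible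
      (X ^ p - X - C ((algebraMap k (RatFunc k)) a * RatFunc.X ^ r) : Polynomial (RatFunc k)))
    (za zb : AlgebraicClosure (RatFunc k))
    (hza : Polynomial.aeval za
      (X ^ p - X - C ((algebraMap k (RatFunc k)) a * RatFunc.X ^ r) : Polynomial (RatFunc k)) = 0)
    (hzb : Polynomial.aeval zb
      (X ^ p - X - C ((algebraMap k (RatFunc k)) b * RatFunc.X ^ r) : Polynomial (RatFunc k)) = 0) :
    IntermediateField.adjoin (RatFunc k) {za} = IntermediateField.adjoin (RatFunc k) {zb} ↔
      ∃ c : ZMod p, a / b = ZMod.castHom (dvd_refl p) k c := by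
  have := Fact.mk hp
  have := charP_of_injective_algebraMap (algebraMap k (RatFunc k)).injective p
  rw [aeval_X_pow_sub_X_sub_C_eq_zero_iff] at hza hzb
  have hcast (c : ZMod p) : algebraMap k (RatFunc k) (ZMod.castHom dvd_rfl k c) =
      ZMod.castHom dvd_rfl (RatFunc k) c :=
    RingHom.map_zmodCastHom _ c
  constructor
  · intro hab
    obtain ⟨c, w, hcw⟩ := exists_eq_castHom_mul_add_pow_sub_self_of_mem_adjoin hIa hza
      (hab ▸ mem_adjoin_simple_self _ zb) hzb
    have hbca : b - ZMod.castHom dvd_rfl k c * a = 0 :=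
      RatFunc.eq_zero_of_pow_sub_self_eq_C_mul_X_pow hp.one_lt
        (hp.coprime_iff_not_dvd.mp hrp.symm) (w := w)
        (by rw [map_sub, map_mul, hcast]; linear_combination -hcw)
    refine ⟨c⁻¹, ?_⟩
    rw [sub_eq_zero.mp hbca, map_inv₀, div_mul_cancel_right₀ ha]
  · rintro ⟨c, hc⟩
    have hacb : a = ZMod.castHom dvd_rfl k c * b := (div_eq_iff hb).mp hc
    have hc0 : ZMod.castHom dvd_rfl (RatFunc k) c ≠ 0 := by
      rw [← hcast, _root_.map_ne_zero, ← hc]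
      exact div_ne_zero ha hb
    have hzero : (0 : RatFunc k) ^ p - 0 = 0 := by rw [zero_pow hp.ne_zero, sub_zero]
    refine le_antisymm (adjoin_simple_le_iff.mpr ?_) (adjoin_simple_le_iff.mpr ?_)
    · refine mem_adjoin_simple_of_eq_castHom_mul_add_pow_sub_self hza hzb (c := c) (w := 0) ?_
      rw [hzero, hacb, map_mul, hcast]
      ring
    · refine mem_adjoin_simple_of_eq_castHom_mul_add_pow_sub_self hzb hza (c := c⁻¹) (w := 0) ?_
      rw [hzero, hacb, map_mul, hcast, add_zero, map_inv₀, mul_assoc, inv_mul_cancel_left₀ hc0]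

theorem stmt5 {p : ℕ} (hp : p.Prime) {k : Type} [Field k] [CharP k p]
    (a b : k) (ha : a ≠ 0) (hb : b ≠ 0) (r : ℕ) (hr : 0 < r) (hrp : Nat.Coprime r p)
    (hIa : Irreducible
      (X ^ p - X - C ((algebraMap k (RatFunc k)) a * RatFunc.X ^ r) : Polynomial (RatFunc k)))
    (hIb : Irreducible
      (X ^ p - X - C ((algebraMap k (RatFunc k)) b * RatFunc.X ^ r) : Polynomial (RatFunc k)))
    (za zb : AlgebraicClosure (RatFunc k))
    (hza : Polynomial.aeval za
      (X ^ p - X - C ((algebraMap k (RatFunc k)) a * RatFunc.X ^ r) : Polynomial (RatFunc k)) = 0)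
    (hzb : Polynomial.aeval zb
      (X ^ p - X - C ((algebraMap k (RatFunc k)) b * RatFunc.X ^ r) : Polynomial (RatFunc k)) = 0) :
    IntermediateField.adjoin (RatFunc k) {za} = IntermediateField.adjoin (RatFunc k) {zb} ↔
      ∃ c : ZMod p, a / b = ZMod.castHom (dvd_refl p) k c :=
  stmt5_general hp a b ha hb r hrp hIa za zb hza hzb
end
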